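/- For every integer n ≥ 0 and reals k, α, β, δ with either (β > 0 and α ≠ 0) or (β < 0 and α < 0), the integrals I_n(k; α, β, δ) = ∫_k^∞ e^{αx}·Hh_n(βx − δ) dx converge and satisfy the recursion I_n(k; α, β, δ) = −(e^{αk}/α)·Hh_n(βk − δ) + (β/α)·I_{n−1}(k; α, β, δ). -/

import Mathlib

/-!
Substituting `t = s + x` writes `Hh_m(x)` as `(1/m!) ∫_0^∞ s^m e^{-(s+x)²/2} ds`, an integral over
a fixed domain; differentiating under the integral sign and integrating by parts in `s` gives
`Hh_m' = -Hh_{m-1}`. Completing the square, `e^{-y²/2} ≤ e^{M²/2 - M y}` for every `M`, so each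
`Hh_n` decays faster than any exponential. The sign conditions allow a choice of `M > 0` with
`α - M β < 0`; then `e^{αx} Hh_n(βx - δ)` is integrable on `(k, ∞)` and vanishes at infinity, and
the recursion is an integration by parts against `e^{αx}`.
-/

open MeasureTheory

/-- The `Hh` functions: `Hh₋₁(x) = e^{−x²/2}` and, for `n ≥ 0`,
`Hh_n(x) = (1/n!)·∫_x^∞ (t − x)^n · e^{−t²/2} dt`. -/
noncomputable def Hh (n : ℤ) (x : ℝ) : ℝ :=
  if n = -1 then Real.exp (-x ^ 2 / 2)
  else if 0 ≤ n then
    (1 / (Nat.factorial n.toNat : ℝ))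
      * ∫ t in Set.Ioi x, (t - x) ^ n.toNat * Real.exp (-t ^ 2 / 2)
  else 0

/-- `I_n(k; α, β, δ) = ∫_k^∞ e^{αx}·Hh_n(βx − δ) dx`. -/
noncomputable def In (n : ℤ) (k α β δ : ℝ) : ℝ :=
  ∫ x in Set.Ioi k, Real.exp (α * x) * Hh n (β * x - δ)

open Real Set Filter Topology

/-- `∫_x^∞ (t - x)^m e^{-t²/2} dt`, after the substitution `t = s + x`. -/
noncomputable def gaussTailMoment (m : ℕ) (x : ℝ) : ℝ :=
  ∫ s in Ioi 0, s ^ m * exp (-(s + x) ^ 2 / 2)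

lemma exp_neg_sq_div_two_le (M y : ℝ) : exp (-y ^ 2 / 2) ≤ exp (M ^ 2 / 2 - M * y) :=
  exp_le_exp.2 (by nlinarith [sq_nonneg (y - M)])

lemma integrableOn_pow_mul_exp_neg_mul (m : ℕ) {b : ℝ} (hb : 0 < b) :
    IntegrableOn (fun s => s ^ m * exp (-b * s)) (Ioi 0) := by
  simpa [rpow_natCast] using
    integrableOn_rpow_mul_exp_neg_mul_rpow (s := m) (by linarith [m.cast_nonneg (α := ℝ)])
      one_pos hb

lemma pow_mul_exp_shift_le (m : ℕ) (M x : ℝ) {s : ℝ} (hs : 0 ≤ s) :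
    s ^ m * exp (-(s + x) ^ 2 / 2) ≤ exp (M ^ 2 / 2 - M * x) * (s ^ m * exp (-M * s)) := by
  calc s ^ m * exp (-(s + x) ^ 2 / 2) ≤ s ^ m * exp (M ^ 2 / 2 - M * (s + x)) := by
        gcongr _ * ?_; exact exp_neg_sq_div_two_le M _
    _ = exp (M ^ 2 / 2 - M * x) * (s ^ m * exp (-M * s)) := by
        rw [mul_left_comm, ← exp_add]; ring_nf

lemma integrableOn_pow_mul_exp_shift (m : ℕ) (x : ℝ) :
    IntegrableOn (fun s => s ^ m * exp (-(s + x) ^ 2 / 2)) (Ioi 0) := by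
  refine ((integrableOn_pow_mul_exp_neg_mul m one_pos).const_mul (exp (1 / 2 - x))).mono' ?_ ?_
  · exact (by fun_prop : Continuous _).aestronglyMeasurable
  · filter_upwards [ae_restrict_mem measurableSet_Ioi] with s hs
    rw [norm_of_nonneg (mul_nonneg (pow_nonneg hs.out.le m) (exp_pos _).le)]
    simpa using pow_mul_exp_shift_le m 1 x hs.le

lemma tendsto_pow_mul_exp_shift (m : ℕ) (x : ℝ) :
    Tendsto (fun s => s ^ m * exp (-(s + x) ^ 2 / 2)) atTop (𝓝 0) := by
  have h := (tendsto_pow_mul_exp_neg_atTop_nhds_zero m).const_mul (exp (1 / 2 - x))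
  rw [mul_zero] at h
  refine squeeze_zero' ?_ ?_ h <;> filter_upwards [eventually_ge_atTop 0] with s hs
  · exact mul_nonneg (pow_nonneg hs m) (exp_pos _).le
  · simpa using pow_mul_exp_shift_le m 1 x hs

lemma hasDerivAt_exp_neg_sq_div_two (y : ℝ) :
    HasDerivAt (fun y => exp (-y ^ 2 / 2)) (-y * exp (-y ^ 2 / 2)) y := by
  have h : HasDerivAt (fun y : ℝ => -y ^ 2 / 2) (-y) y :=
    ((hasDerivAt_pow 2 y).fun_neg.div_const 2).congr_deriv (by norm_num; ring)
  simpa [mul_comm] using h.exp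

lemma integral_pow_mul_mul_exp_shift (m : ℕ) (x : ℝ) :
    ∫ s in Ioi 0, s ^ m * ((s + x) * exp (-(s + x) ^ 2 / 2))
      = m * gaussTailMoment (m - 1) x + 0 ^ m * exp (-x ^ 2 / 2) := by
  have hint : IntegrableOn (fun s => s ^ m * ((s + x) * exp (-(s + x) ^ 2 / 2))) (Ioi 0) :=
    ((integrableOn_pow_mul_exp_shift (m + 1) x).add
      ((integrableOn_pow_mul_exp_shift m x).const_mul x)).congr_fun
      (fun s _ => by simp only [Pi.add_apply]; ring) measurableSet_Ioi
  have hint' := (integrableOn_pow_mul_exp_shift (m - 1) x).const_mul (m : ℝ)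
  have hderiv : ∀ s ∈ Ici (0 : ℝ), HasDerivAt (fun s => -(s ^ m * exp (-(s + x) ^ 2 / 2)))
      (s ^ m * ((s + x) * exp (-(s + x) ^ 2 / 2))
        - m * (s ^ (m - 1) * exp (-(s + x) ^ 2 / 2))) s := fun s _ =>
    ((hasDerivAt_pow m s).fun_mul
      ((hasDerivAt_exp_neg_sq_div_two (s + x)).comp_add_const s x)).fun_neg.congr_deriv (by ring)
  have hparts := integral_Ioi_of_hasDerivAt_of_tendsto' hderiv (hint.sub hint')
    (by simpa using (tendsto_pow_mul_exp_shift m x).neg)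
  rw [integral_sub hint hint', integral_const_mul] at hparts
  simp only [gaussTailMoment, zero_add] at hparts ⊢
  linarith

lemma hasDerivAt_gaussTailMoment (m : ℕ) (x₀ : ℝ) :
    HasDerivAt (gaussTailMoment m)
      (-(m * gaussTailMoment (m - 1) x₀ + 0 ^ m * exp (-x₀ ^ 2 / 2))) x₀ := by
  set F' : ℝ → ℝ → ℝ := fun x s => -(s ^ m * ((s + x) * exp (-(s + x) ^ 2 / 2)))
  have hdiff : ∀ x s : ℝ, HasDerivAt (fun x => s ^ m * exp (-(s + x) ^ 2 / 2)) (F' x s) x := by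
    intro x s
    exact (((hasDerivAt_exp_neg_sq_div_two (s + x)).comp_const_add s x).const_mul
      (s ^ m)).congr_deriv (by simp only [F']; ring)
  have hbound : ∀ᵐ s ∂volume.restrict (Ioi 0), ∀ x ∈ Metric.ball x₀ 1, ‖F' x s‖ ≤
      exp (3 / 2 - x₀) * (s ^ (m + 1) * exp (-1 * s) + (|x₀| + 1) * (s ^ m * exp (-1 * s))) := by
    filter_upwards [ae_restrict_mem measurableSet_Ioi] with s (hs : 0 < s) x hx
    rw [Metric.mem_ball, dist_eq] at hx
    have habs : |s + x| ≤ s + (|x₀| + 1) := by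
      have := abs_sub_abs_le_abs_sub x x₀
      have := abs_add_le s x
      rw [abs_of_pos hs] at this
      linarith
    have hexp : exp (-(s + x) ^ 2 / 2) ≤ exp (3 / 2 - x₀) * exp (-1 * s) := by
      refine (exp_neg_sq_div_two_le 1 _).trans ?_
      rw [← exp_add]
      exact exp_le_exp.2 (by linarith [(abs_lt.1 hx).1])
    calc ‖F' x s‖ = s ^ m * (|s + x| * exp (-(s + x) ^ 2 / 2)) := by
          simp [F', abs_of_pos hs]
      _ ≤ s ^ m * ((s + (|x₀| + 1)) * (exp (3 / 2 - x₀) * exp (-1 * s))) := by gcongr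
      _ = _ := by ring
  have hbound_int := ((integrableOn_pow_mul_exp_neg_mul (m + 1) one_pos).add
    ((integrableOn_pow_mul_exp_neg_mul m one_pos).const_mul (|x₀| + 1))).const_mul
    (exp (3 / 2 - x₀))
  obtain ⟨-, h⟩ := hasDerivAt_integral_of_dominated_loc_of_deriv_le
    (F := fun x s => s ^ m * exp (-(s + x) ^ 2 / 2)) (Metric.ball_mem_nhds x₀ one_pos)
    (Eventually.of_forall fun x => (by fun_prop : Continuous _).aestronglyMeasurable)
    (integrableOn_pow_mul_exp_shift m x₀) (by fun_prop : Continuous (F' x₀)).aestronglyMeasurable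
    hbound hbound_int (Eventually.of_forall fun s x _ => hdiff x s)
  rwa [integral_neg, integral_pow_mul_mul_exp_shift] at h

lemma setIntegral_Ioi_zero_comp_add_right {E : Type*} [NormedAddCommGroup E] [NormedSpace ℝ E]
    (f : ℝ → E) (x : ℝ) : ∫ s in Ioi 0, f (s + x) = ∫ t in Ioi x, f t := by
  have h := (measurePreserving_add_right volume x).setIntegral_preimage_emb
    (MeasurableEquiv.addRight x).measurableEmbedding f (Ioi x)
  rwa [preimage_add_const_Ioi, sub_self] at h

lemma Int.exists_eq_natCast_or_eq_neg_one_or_lt_neg_one (n : ℤ) :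
    (∃ m : ℕ, n = m) ∨ n = -1 ∨ n < -1 := by
  rcases le_or_gt 0 n with h | h
  · exact Or.inl ⟨n.toNat, by omega⟩
  · omega

lemma Hh_natCast (m : ℕ) (x : ℝ) : Hh m x = gaussTailMoment m x / m.factorial := by
  rw [Hh, if_neg (by omega), if_pos (by omega), Int.toNat_natCast, gaussTailMoment,
    ← setIntegral_Ioi_zero_comp_add_right, one_div_mul_eq_div]
  simp only [add_sub_cancel_right]

lemma Hh_neg_one (x : ℝ) : Hh (-1) x = exp (-x ^ 2 / 2) := by
  simp [Hh]

lemma Hh_of_lt_neg_one {n : ℤ} (hn : n < -1) (x : ℝ) : Hh n x = 0 := by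
  rw [Hh, if_neg (by omega), if_neg (by omega)]

lemma hasDerivAt_Hh_natCast (m : ℕ) (x : ℝ) : HasDerivAt (Hh m) (-Hh (m - 1) x) x := by
  rw [show Hh m = fun x => gaussTailMoment m x / m.factorial from funext (Hh_natCast m)]
  refine ((hasDerivAt_gaussTailMoment m x).div_const _).congr_deriv ?_
  rcases m with _ | j
  · simp [Hh_neg_one]
  · rw [show ((j + 1 : ℕ) : ℤ) - 1 = j by omega, Hh_natCast, Nat.factorial_succ]
    push_cast
    field_simp
    simp

lemma Hh_nonneg (n : ℤ) (x : ℝ) : 0 ≤ Hh n x := by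
  rw [Hh]
  split_ifs
  · positivity
  · refine mul_nonneg (by positivity) (setIntegral_nonneg measurableSet_Ioi fun t ht => ?_)
    exact mul_nonneg (pow_nonneg (sub_nonneg.2 (le_of_lt ht)) _) (exp_pos _).le
  · rfl

lemma continuous_Hh (n : ℤ) : Continuous (Hh n) := by
  obtain ⟨m, rfl⟩ | hn | hn := Int.exists_eq_natCast_or_eq_neg_one_or_lt_neg_one n
  · exact continuous_iff_continuousAt.2 fun x => (hasDerivAt_Hh_natCast m x).continuousAt
  · rw [show Hh n = fun x => exp (-x ^ 2 / 2) from funext fun x => hn ▸ Hh_neg_one x]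
    fun_prop
  · rw [show Hh n = fun _ => 0 from funext (Hh_of_lt_neg_one hn)]
    exact continuous_const

lemma gaussTailMoment_le (m : ℕ) {M : ℝ} (hM : 0 < M) (x : ℝ) :
    gaussTailMoment m x ≤ exp (M ^ 2 / 2 - M * x) * ∫ s in Ioi 0, s ^ m * exp (-M * s) := by
  rw [← integral_const_mul]
  exact setIntegral_mono_on (integrableOn_pow_mul_exp_shift m x)
    ((integrableOn_pow_mul_exp_neg_mul m hM).const_mul _) measurableSet_Ioi
    fun s hs => pow_mul_exp_shift_le m M x (le_of_lt hs)

lemma exists_abs_Hh_le (n : ℤ) {M : ℝ} (hM : 0 < M) :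
    ∃ C, ∀ x, |Hh n x| ≤ C * exp (-M * x) := by
  obtain ⟨m, rfl⟩ | rfl | hn := Int.exists_eq_natCast_or_eq_neg_one_or_lt_neg_one n
  · refine ⟨exp (M ^ 2 / 2) * (∫ s in Ioi 0, s ^ m * exp (-M * s)) / m.factorial, fun x => ?_⟩
    rw [abs_of_nonneg (Hh_nonneg _ x), Hh_natCast, div_mul_eq_mul_div]
    gcongr
    calc gaussTailMoment m x ≤ _ := gaussTailMoment_le m hM x
      _ = _ := by rw [sub_eq_add_neg, exp_add, neg_mul]; ring
  · refine ⟨exp (M ^ 2 / 2), fun x => ?_⟩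
    rw [Hh_neg_one, abs_of_pos (exp_pos _), ← exp_add]
    exact (exp_neg_sq_div_two_le M x).trans_eq (by ring_nf)
  · exact ⟨0, fun x => by simp [Hh_of_lt_neg_one hn]⟩

section ExpWeighted

variable {f g : ℝ → ℝ} {α β δ C M : ℝ}

lemma abs_exp_mul_comp_le (hf : ∀ y, |f y| ≤ C * exp (-M * y)) (x : ℝ) :
    |exp (α * x) * f (β * x - δ)| ≤ C * exp (M * δ) * exp ((α - M * β) * x) := by
  rw [abs_mul, abs_of_pos (exp_pos _)]
  calc exp (α * x) * |f (β * x - δ)| ≤ exp (α * x) * (C * exp (-M * (β * x - δ))) := by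
        gcongr; exact hf _
    _ = C * exp (M * δ) * exp ((α - M * β) * x) := by
        rw [mul_left_comm, mul_assoc, ← exp_add, ← exp_add]; ring_nf

lemma integrableOn_exp_mul_comp (hcont : Continuous f) (hf : ∀ y, |f y| ≤ C * exp (-M * y))
    (hdecay : α - M * β < 0) (k : ℝ) :
    IntegrableOn (fun x => exp (α * x) * f (β * x - δ)) (Ioi k) := by
  refine ((exp_neg_integrableOn_Ioi k (neg_pos.2 hdecay)).const_mul (C * exp (M * δ))).mono'
    (by fun_prop : Continuous _).aestronglyMeasurable (Eventually.of_forall fun x => ?_)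
  simpa using abs_exp_mul_comp_le hf x

lemma tendsto_exp_mul_comp (hf : ∀ y, |f y| ≤ C * exp (-M * y)) (hdecay : α - M * β < 0) :
    Tendsto (fun x => exp (α * x) * f (β * x - δ)) atTop (𝓝 0) := by
  have h := (tendsto_exp_atBot.comp (tendsto_id.const_mul_atTop_of_neg hdecay)).const_mul
    (C * exp (M * δ))
  rw [mul_zero] at h
  exact squeeze_zero_norm (abs_exp_mul_comp_le hf) h

lemma integral_exp_mul_comp_eq (hderiv : ∀ y, HasDerivAt f (-g y) y) (hα : α ≠ 0) (k : ℝ)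
    (hfi : IntegrableOn (fun x => exp (α * x) * f (β * x - δ)) (Ioi k))
    (hgi : IntegrableOn (fun x => exp (α * x) * g (β * x - δ)) (Ioi k))
    (hft : Tendsto (fun x => exp (α * x) * f (β * x - δ)) atTop (𝓝 0)) :
    ∫ x in Ioi k, exp (α * x) * f (β * x - δ)
      = -(exp (α * k) / α) * f (β * k - δ)
        + β / α * ∫ x in Ioi k, exp (α * x) * g (β * x - δ) := by
  have hu : ∀ x ∈ Ici k, HasDerivAt (fun x => exp (α * x) * f (β * x - δ))
      (α * (exp (α * x) * f (β * x - δ)) - β * (exp (α * x) * g (β * x - δ))) x := fun x _ => by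
    have hexp := ((hasDerivAt_id x).const_mul α).exp
    have hcomp := (hderiv (β * x - δ)).comp x (((hasDerivAt_id x).const_mul β).sub_const δ)
    exact (hexp.fun_mul hcomp).congr_deriv (by simp only [id, Function.comp_apply]; ring)
  have hparts := integral_Ioi_of_hasDerivAt_of_tendsto' hu
    ((hfi.const_mul α).sub (hgi.const_mul β)) hft
  rw [integral_sub (hfi.const_mul α) (hgi.const_mul β), integral_const_mul, integral_const_mul]
    at hparts
  set A := ∫ x in Ioi k, exp (α * x) * f (β * x - δ)
  set B := ∫ x in Ioi k, exp (α * x) * g (β * x - δ)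
  calc A = α * A / α := (mul_div_cancel_left₀ A hα).symm
    _ = _ := by rw [show α * A = β * B - exp (α * k) * f (β * k - δ) by linarith]; ring

end ExpWeighted

lemma exists_pos_sub_mul_neg {α β : ℝ} (h : (0 < β ∧ α ≠ 0) ∨ (β < 0 ∧ α < 0)) :
    ∃ M, 0 < M ∧ α - M * β < 0 := by
  rcases h with ⟨hβ, -⟩ | ⟨hβ, hα⟩
  · refine ⟨(|α| + 1) / β, by positivity, ?_⟩
    rw [div_mul_cancel₀ _ hβ.ne']
    linarith [le_abs_self α]
  · refine ⟨α / (2 * β), div_pos_of_neg_of_neg hα (by linarith), ?_⟩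
    rw [div_mul_eq_mul_div, mul_div_mul_right _ _ hβ.ne]
    linarith

/-- For every integer `n ≥ 0` and reals `k, α, β, δ` with either
(`β > 0` and `α ≠ 0`) or (`β < 0` and `α < 0`), the integral defining `I_n(k; α, β, δ)`
converges and `I_n(k; α, β, δ) = −(e^{αk}/α)·Hh_n(βk − δ) + (β/α)·I_{n−1}(k; α, β, δ)`. -/
theorem In_recursion (n : ℕ) (k α β δ : ℝ)
    (h : (0 < β ∧ α ≠ 0) ∨ (β < 0 ∧ α < 0)) :
    IntegrableOn (fun x => Real.exp (α * x) * Hh n (β * x - δ)) (Set.Ioi k) volume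
    ∧ In n k α β δ
        = -(Real.exp (α * k) / α) * Hh n (β * k - δ) + β / α * In ((n : ℤ) - 1) k α β δ := by
  have hα : α ≠ 0 := by rcases h with ⟨-, hα⟩ | ⟨-, hα⟩ <;> [exact hα; exact hα.ne]
  obtain ⟨M, hM, hdecay⟩ := exists_pos_sub_mul_neg h
  obtain ⟨C, hC⟩ := exists_abs_Hh_le n hM
  obtain ⟨C', hC'⟩ := exists_abs_Hh_le (n - 1) hM
  have hint := integrableOn_exp_mul_comp (δ := δ) (continuous_Hh n) hC hdecay k
  exact ⟨hint, integral_exp_mul_comp_eq (hasDerivAt_Hh_natCast n) hα k hint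
    (integrableOn_exp_mul_comp (continuous_Hh _) hC' hdecay k) (tendsto_exp_mul_comp hC hdecay)⟩
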